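/- arXiv:math/0506621 — 3 statements merged into one kernel-verified Lean document; each statement's English description precedes it below -/
import Mathlib

section
/- For each T > 0 let b₁(·;T), b₂(·;T) : [0,T] → ℝ be continuous, suppose b₁ and b₂ are uniformly bounded on Δ, and suppose there exist reals b̄₁, b̄₂ with b̄₁ > 0 such that for i = 1,2 and every ε > 0 there exists N with |bᵢ(t;T) − b̄ᵢ| < ε whenever (t,T) ∈ Δ, t ≥ N and T − t ≥ N. For each T > 0 let v(·;T) : [0,T] → ℝ be the solution of the linear terminal value problem v̇(t) − b₁(t;T)·v(t) + b₂(t;T) = 0 for t ∈ [0,T], v(T) = 0, and set v̄ := b̄₂/b̄₁. Then: (i) sup over (t,T) ∈ Δ of |v(t;T)| is finite; (ii) for every ε > 0 there exists N such that |v(t;T) − v̄| < ε whenever (t,T) ∈ Δ, t ≥ N and T − t ≥ N; and (iii) for all δ, ε ∈ (0,∞) with δ + ε < 1, lim_{T→∞} sup_{δT ≤ t ≤ (1−ε)T} |v(t;T) − v̄| = 0. -/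
open Set intervalIntegral MeasureTheory

lemma myFTC {f : ℝ → ℝ} {T x : ℝ} (h : ContinuousOn f (Set.Icc 0 T))
    (hx : x ∈ Set.Ioo (0:ℝ) T) :
    HasDerivWithinAt (fun u => ∫ r in (0:ℝ)..u, f r) (f x) (Set.Ioi x) x := by
  have hsub : Set.uIcc (0:ℝ) x ⊆ Set.Icc 0 T := by
    rw [Set.uIcc_of_le hx.1.le]
    exact Set.Icc_subset_Icc le_rfl hx.2.le
  have hint : IntervalIntegrable f volume 0 x := (h.mono hsub).intervalIntegrable
  have hCA : ContinuousAt f x := h.continuousAt (Icc_mem_nhds hx.1 hx.2)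
  have hmeas : StronglyMeasurableAtFilter f (nhdsWithin x (Set.Ioi x)) volume :=
    ⟨Set.Ioo 0 T, mem_nhdsWithin_of_mem_nhds (Ioo_mem_nhds hx.1 hx.2),
      (h.mono Set.Ioo_subset_Icc_self).aestronglyMeasurable measurableSet_Ioo⟩
  exact (intervalIntegral.integral_hasDerivWithinAt_right hint hmeas
    hCA.continuousWithinAt).mono Set.Ioi_subset_Ici_self

lemma myPrimCont {f : ℝ → ℝ} {T : ℝ} (hT : 0 ≤ T) (h : ContinuousOn f (Set.Icc 0 T)) :
    ContinuousOn (fun u => ∫ r in (0:ℝ)..u, f r) (Set.Icc 0 T) := by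
  have := intervalIntegral.continuousOn_primitive_interval
    (f := f) (a := (0:ℝ)) (b := T) (μ := volume) ?_
  · rwa [Set.uIcc_of_le hT] at this
  · rw [Set.uIcc_of_le hT]; exact h.integrableOn_Icc

/-- solution formula -/
lemma mySol {T : ℝ} (hT : 0 < T) {f1 f2 w : ℝ → ℝ}
    (h1 : ContinuousOn f1 (Set.Icc 0 T)) (h2 : ContinuousOn f2 (Set.Icc 0 T))
    (hw : ∀ t ∈ Set.Icc (0:ℝ) T,
      HasDerivWithinAt w (f1 t * w t - f2 t) (Set.Icc (0:ℝ) T) t)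
    (hwT : w T = 0) {t : ℝ} (ht : t ∈ Set.Icc (0:ℝ) T) :
    w t = ∫ s in t..T,
      Real.exp ((∫ r in (0:ℝ)..t, f1 r) - ∫ r in (0:ℝ)..s, f1 r) * f2 s := by
  set g : ℝ → ℝ := fun u => ∫ r in (0:ℝ)..u, f1 r with hg
  have hgc : ContinuousOn g (Set.Icc 0 T) := myPrimCont hT.le h1
  have hwc : ContinuousOn w (Set.Icc 0 T) := fun x hx => (hw x hx).continuousWithinAt
  set F : ℝ → ℝ := fun u => Real.exp (-(g u)) * w u with hF
  have hFc : ContinuousOn F (Set.Icc 0 T) := ((hgc.neg).rexp).mul hwc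
  have hFd : ∀ x ∈ Set.Ioo t T,
      HasDerivWithinAt F (-(Real.exp (-(g x)) * f2 x)) (Set.Ioi x) x := by
    intro x hx
    have hx' : x ∈ Set.Ioo (0:ℝ) T := ⟨lt_of_le_of_lt ht.1 hx.1, hx.2⟩
    have hgd : HasDerivWithinAt g (f1 x) (Set.Ioi x) x := myFTC h1 hx'
    have hmem : Set.Icc (0:ℝ) T ∈ nhdsWithin x (Set.Ioi x) :=
      Filter.mem_of_superset (Ioc_mem_nhdsGT_of_mem ⟨le_rfl, hx'.2⟩)
        (fun y hy => ⟨hx'.1.le.trans hy.1.le, hy.2⟩)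
    have hwd : HasDerivWithinAt w (f1 x * w x - f2 x) (Set.Ioi x) x :=
      (hw x (Set.mem_Icc_of_Ioo hx')).mono_of_mem_nhdsWithin hmem
    have hexp : HasDerivWithinAt (fun u => Real.exp (-(g u)))
        (Real.exp (-(g x)) * (-(f1 x))) (Set.Ioi x) x := hgd.neg.exp
    have := hexp.mul hwd
    exact this.congr_deriv (by ring)
  have hint : IntervalIntegrable (fun s => -(Real.exp (-(g s)) * f2 s)) volume t T := by
    apply ContinuousOn.intervalIntegrable
    apply ContinuousOn.mono (s := Set.Icc 0 T) (((hgc.neg).rexp).mul h2).neg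
    rw [Set.uIcc_of_le ht.2]; exact Set.Icc_subset_Icc ht.1 le_rfl
  have key := intervalIntegral.integral_eq_sub_of_hasDeriv_right_of_le ht.2
    (hFc.mono (Set.Icc_subset_Icc ht.1 le_rfl)) hFd hint
  have hFT : F T = 0 := by simp [hF, hwT]
  rw [hFT, intervalIntegral.integral_neg] at key
  have hwt : Real.exp (-(g t)) * w t = ∫ s in t..T, Real.exp (-(g s)) * f2 s := by
    have : F t = ∫ s in t..T, Real.exp (-(g s)) * f2 s := by linarith [key]
    simpa [hF] using this
  have hmul : w t = Real.exp (g t) * (Real.exp (-(g t)) * w t) := by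
    rw [← mul_assoc, ← Real.exp_add]; simp
  rw [hmul, hwt, ← intervalIntegral.integral_const_mul]
  congr 1
  funext s
  rw [← mul_assoc, ← Real.exp_add]
  simp only [hg]
  ring_nf

lemma myIdent {T : ℝ} (hT : 0 < T) {f1 : ℝ → ℝ}
    (h1 : ContinuousOn f1 (Set.Icc 0 T)) {t : ℝ} (ht : t ∈ Set.Icc (0:ℝ) T) :
    ∫ s in t..T, f1 s * Real.exp ((∫ r in (0:ℝ)..t, f1 r) - ∫ r in (0:ℝ)..s, f1 r)
      = 1 - Real.exp ((∫ r in (0:ℝ)..t, f1 r) - ∫ r in (0:ℝ)..T, f1 r) := by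
  set g : ℝ → ℝ := fun u => ∫ r in (0:ℝ)..u, f1 r with hg
  have hgc : ContinuousOn g (Set.Icc 0 T) := myPrimCont hT.le h1
  set H : ℝ → ℝ := fun u => -(Real.exp (g t - g u)) with hH
  have hHc : ContinuousOn H (Set.Icc 0 T) := ((continuousOn_const.sub hgc).rexp).neg
  have hHd : ∀ x ∈ Set.Ioo t T,
      HasDerivWithinAt H (f1 x * Real.exp (g t - g x)) (Set.Ioi x) x := by
    intro x hx
    have hx' : x ∈ Set.Ioo (0:ℝ) T := ⟨lt_of_le_of_lt ht.1 hx.1, hx.2⟩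
    have hgd : HasDerivWithinAt g (f1 x) (Set.Ioi x) x := myFTC h1 hx'
    have := ((hgd.const_sub (g t)).exp).neg
    exact this.congr_deriv (by ring)
  have hint : IntervalIntegrable (fun s => f1 s * Real.exp (g t - g s)) volume t T := by
    apply ContinuousOn.intervalIntegrable
    apply ContinuousOn.mono (s := Set.Icc 0 T) (h1.mul ((continuousOn_const.sub hgc).rexp))
    rw [Set.uIcc_of_le ht.2]; exact Set.Icc_subset_Icc ht.1 le_rfl
  have key := intervalIntegral.integral_eq_sub_of_hasDeriv_right_of_le ht.2
    (hHc.mono (Set.Icc_subset_Icc ht.1 le_rfl)) hHd hint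
  rw [key]
  simp only [hH, hg, sub_self, Real.exp_zero]
  ring

lemma myExpBound {T C N0 m : ℝ} {f1 : ℝ → ℝ} (hC : 0 ≤ C) (hN0 : 0 ≤ N0) (hm : 0 ≤ m)
    (h1 : ContinuousOn f1 (Set.Icc 0 T))
    (hb : ∀ r ∈ Set.Icc (0:ℝ) T, -C ≤ f1 r)
    (hmid : ∀ r ∈ Set.Icc (0:ℝ) T, N0 ≤ r → N0 ≤ T - r → m ≤ f1 r)
    {t s : ℝ} (ht : 0 ≤ t) (hts : t ≤ s) (hsT : s ≤ T) :
    m * (s - t) - 2 * N0 * (m + C) ≤ ∫ r in t..s, f1 r := by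
  set p : ℝ := min s (max t N0) with hp
  set q : ℝ := max p (min s (T - N0)) with hq
  have htp : t ≤ p := le_min hts (le_max_left _ _)
  have hps : p ≤ s := min_le_left _ _
  have hpq : p ≤ q := le_max_left _ _
  have hqs : q ≤ s := max_le hps (min_le_left _ _)
  have hI : ∀ {a b : ℝ}, t ≤ a → a ≤ b → b ≤ s → IntervalIntegrable f1 volume a b := by
    intro a b ha hab hbs
    refine (h1.mono ?_).intervalIntegrable
    rw [Set.uIcc_of_le hab]
    exact Set.Icc_subset_Icc (ht.trans ha) (hbs.trans hsT)
  have hmem : ∀ {a b r : ℝ}, t ≤ a → b ≤ s → r ∈ Set.Icc a b → r ∈ Set.Icc (0:ℝ) T :=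
    fun ha hbs hr => ⟨ht.trans (ha.trans hr.1), (hr.2.trans hbs).trans hsT⟩
  have hsplit2 : (∫ r in p..q, f1 r) + ∫ r in q..s, f1 r = ∫ r in p..s, f1 r :=
    intervalIntegral.integral_add_adjacent_intervals (hI htp hpq hqs)
      (hI (htp.trans hpq) hqs le_rfl)
  have hsplit1 : (∫ r in t..p, f1 r) + ∫ r in p..s, f1 r = ∫ r in t..s, f1 r :=
    intervalIntegral.integral_add_adjacent_intervals (hI le_rfl htp hps)
      (hI htp hps le_rfl)
  have hptN : p - t ≤ N0 := by
    have h1' : p ≤ max t N0 := min_le_right _ _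
    have h2' : max t N0 ≤ t + N0 := max_le (by linarith) (by linarith)
    linarith
  have hsqN : s - q ≤ N0 := by
    have h1' : min s (T - N0) ≤ q := le_max_right _ _
    have h2' : s - N0 ≤ min s (T - N0) := le_min (by linarith) (by linarith)
    linarith
  have B1 : -(C * N0) ≤ ∫ r in t..p, f1 r := by
    have h := intervalIntegral.integral_mono_on htp intervalIntegrable_const
      (hI le_rfl htp hps) (fun r hr => hb r (hmem le_rfl hps hr))
    rw [intervalIntegral.integral_const, smul_eq_mul] at h
    nlinarith
  have B3 : -(C * N0) ≤ ∫ r in q..s, f1 r := by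
    have h := intervalIntegral.integral_mono_on hqs intervalIntegrable_const
      (hI (htp.trans hpq) hqs le_rfl) (fun r hr => hb r (hmem (htp.trans hpq) le_rfl hr))
    rw [intervalIntegral.integral_const, smul_eq_mul] at h
    nlinarith
  have B2 : m * (q - p) ≤ ∫ r in p..q, f1 r := by
    rcases eq_or_lt_of_le hpq with heq | hlt
    · rw [← heq]; simp
    · have hNp : N0 ≤ p := by
        have hx : max t N0 ≤ s := by
          by_contra hcon
          push_neg at hcon
          have : p = s := min_eq_left hcon.le
          linarith [hlt.trans_le hqs]
        rw [hp, min_eq_right hx]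
        exact le_max_right _ _
      have hqT : q ≤ T - N0 := by
        have hx : p < min s (T - N0) := by
          by_contra hcon
          push_neg at hcon
          have : q = p := max_eq_left hcon
          linarith
        rw [hq, max_eq_right hx.le]
        exact min_le_right _ _
      have h := intervalIntegral.integral_mono_on hpq intervalIntegrable_const
        (hI htp hpq hqs)
        (fun r hr => hmid r (hmem htp hqs hr) (hNp.trans hr.1) (by linarith [hr.2]))
      rw [intervalIntegral.integral_const, smul_eq_mul] at h
      linarith [h]
  nlinarith [hsplit1, hsplit2, B1, B2, B3, hm, hptN, hsqN, mul_nonneg hm hN0]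

lemma myExpPtw {T C N0 m : ℝ} {f1 : ℝ → ℝ} (hC : 0 ≤ C) (hN0 : 0 ≤ N0) (hm : 0 ≤ m)
    (h1 : ContinuousOn f1 (Set.Icc 0 T))
    (hb : ∀ r ∈ Set.Icc (0:ℝ) T, -C ≤ f1 r)
    (hmid : ∀ r ∈ Set.Icc (0:ℝ) T, N0 ≤ r → N0 ≤ T - r → m ≤ f1 r)
    {t s : ℝ} (ht : 0 ≤ t) (hts : t ≤ s) (hsT : s ≤ T) :
    Real.exp ((∫ r in (0:ℝ)..t, f1 r) - ∫ r in (0:ℝ)..s, f1 r)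
      ≤ Real.exp (2 * N0 * (m + C)) * Real.exp (-(m * (s - t))) := by
  rw [← Real.exp_add]
  apply Real.exp_le_exp.2
  have hI : ∀ {b : ℝ}, 0 ≤ b → b ≤ T → IntervalIntegrable f1 volume 0 b := by
    intro b hb0 hbT
    refine (h1.mono ?_).intervalIntegrable
    rw [Set.uIcc_of_le hb0]
    exact Set.Icc_subset_Icc le_rfl hbT
  have hI2 : IntervalIntegrable f1 volume t s := by
    refine (h1.mono ?_).intervalIntegrable
    rw [Set.uIcc_of_le hts]
    exact Set.Icc_subset_Icc ht hsT
  have hadd : (∫ r in (0:ℝ)..t, f1 r) + ∫ r in t..s, f1 r = ∫ r in (0:ℝ)..s, f1 r :=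
    intervalIntegral.integral_add_adjacent_intervals (hI ht (hts.trans hsT)) hI2
  have := myExpBound hC hN0 hm h1 hb hmid ht hts hsT
  linarith

lemma myExpInt {m t a b : ℝ} (hm : 0 < m) :
    ∫ s in a..b, Real.exp (-(m * (s - t)))
      = (Real.exp (-(m * (a - t))) - Real.exp (-(m * (b - t)))) / m := by
  have hd : ∀ s : ℝ, HasDerivAt (fun u => -(1/m) * Real.exp (-(m * (u - t))))
      (Real.exp (-(m * (s - t)))) s := by
    intro s
    have h1 : HasDerivAt (fun u : ℝ => -(m * (u - t))) (-m) s := by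
      have := ((hasDerivAt_id s).sub_const t).const_mul m
      exact this.neg.congr_deriv (by ring)
    have := (h1.exp).const_mul (-(1/m))
    exact this.congr_deriv (by field_simp [hm.ne'])
  have hcont : Continuous fun s : ℝ => Real.exp (-(m * (s - t))) := by continuity
  have := intervalIntegral.integral_eq_sub_of_hasDerivAt
    (fun x _ => hd x) (hcont.intervalIntegrable a b)
  rw [this]
  field_simp
  ring

lemma myIntEst {a b t m E : ℝ} (hab : a ≤ b) (hm : 0 < m) {F : ℝ → ℝ}
    (hFi : IntervalIntegrable F volume a b)
    (hptw : ∀ s ∈ Set.Icc a b, |F s| ≤ E * Real.exp (-(m * (s - t)))) :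
    |∫ s in a..b, F s| ≤ E * Real.exp (-(m * (a - t))) / m := by
  have hE : 0 ≤ E := by
    have h := (abs_nonneg (F a)).trans (hptw a ⟨le_rfl, hab⟩)
    nlinarith [Real.exp_pos (-(m * (a - t)))]
  have hcont : Continuous fun s : ℝ => E * Real.exp (-(m * (s - t))) := by continuity
  calc |∫ s in a..b, F s| ≤ ∫ s in a..b, |F s| :=
        intervalIntegral.abs_integral_le_integral_abs hab
    _ ≤ ∫ s in a..b, E * Real.exp (-(m * (s - t))) :=
        intervalIntegral.integral_mono_on hab hFi.abs (hcont.intervalIntegrable a b) hptw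
    _ = E * ((Real.exp (-(m * (a - t))) - Real.exp (-(m * (b - t)))) / m) := by
        rw [intervalIntegral.integral_const_mul, myExpInt hm]
    _ ≤ E * Real.exp (-(m * (a - t))) / m := by
        have h2 := Real.exp_pos (-(m * (b - t)))
        rw [mul_div_assoc]
        gcongr
        linarith

set_option maxHeartbeats 1600000 in
/-- Theorem B.3: for the linear terminal value problem
`v̇ − b₁(·;T)v + b₂(·;T) = 0`, `v(T) = 0`, with `b₁, b₂` continuous, uniformly
bounded on `Δ`, and converging to `b̄₁ > 0`, `b̄₂` as `t → ∞`, `T − t → ∞`: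
(i) `v(·;T)` is bounded on `Δ`; (ii) `v(t;T) → v̄ := b̄₂/b̄₁` as `t → ∞`, `T − t → ∞`;
(iii) uniform convergence on `[δT, (1−ε)T]`. -/
theorem stmt_17 (b1 b2 : ℝ → ℝ → ℝ)
    (hc1 : ∀ T : ℝ, 0 < T → ContinuousOn (b1 T) (Set.Icc (0 : ℝ) T))
    (hc2 : ∀ T : ℝ, 0 < T → ContinuousOn (b2 T) (Set.Icc (0 : ℝ) T))
    (hbdd : ∃ C : ℝ, ∀ T : ℝ, 0 < T → ∀ t ∈ Set.Icc (0 : ℝ) T, |b1 T t| ≤ C ∧ |b2 T t| ≤ C)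
    (bb1 bb2 : ℝ) (hbb1 : 0 < bb1)
    (hconv : ∀ ε : ℝ, 0 < ε → ∃ N : ℝ, ∀ T : ℝ, 0 < T → ∀ t ∈ Set.Icc (0 : ℝ) T,
      N ≤ t → N ≤ T - t → |b1 T t - bb1| < ε ∧ |b2 T t - bb2| < ε)
    (v : ℝ → ℝ → ℝ)
    (hvsol : ∀ T : ℝ, 0 < T →
      (∀ t ∈ Set.Icc (0 : ℝ) T,
        HasDerivWithinAt (v T) (b1 T t * v T t - b2 T t) (Set.Icc (0 : ℝ) T) t) ∧
      v T T = 0)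
    (vbar : ℝ) (hvbar : vbar = bb2 / bb1) :
    (∃ C : ℝ, ∀ T : ℝ, 0 < T → ∀ t ∈ Set.Icc (0 : ℝ) T, |v T t| ≤ C) ∧
    (∀ ε : ℝ, 0 < ε → ∃ N : ℝ, ∀ T : ℝ, 0 < T → ∀ t ∈ Set.Icc (0 : ℝ) T,
      N ≤ t → N ≤ T - t → |v T t - vbar| < ε) ∧
    (∀ δ ε : ℝ, 0 < δ → 0 < ε → δ + ε < 1 →
      Filter.Tendsto (fun T : ℝ => ⨆ t ∈ Set.Icc (δ * T) ((1 - ε) * T), |v T t - vbar|)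
        Filter.atTop (nhds 0)) := by
  obtain ⟨C, hC⟩ := hbdd
  have hC0 : 0 ≤ C := (abs_nonneg _).trans (hC 1 one_pos 0 ⟨le_rfl, zero_le_one⟩).1
  set m : ℝ := bb1 / 2 with hmdef
  have hm : 0 < m := by positivity
  obtain ⟨N', hN'⟩ := hconv (bb1 / 2) (by positivity)
  set N0 : ℝ := max N' 0 with hN0def
  have hN00 : 0 ≤ N0 := le_max_right _ _
  set D : ℝ := 2 * N0 * (m + C) with hDdef
  have hD0 : 0 ≤ D := by positivity
  -- basic facts about b1
  have hblow : ∀ T : ℝ, 0 < T → ∀ r ∈ Set.Icc (0:ℝ) T, -C ≤ b1 T r :=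
    fun T hT r hr => neg_le_of_abs_le (hC T hT r hr).1
  have hmid : ∀ T : ℝ, 0 < T → ∀ r ∈ Set.Icc (0:ℝ) T, N0 ≤ r → N0 ≤ T - r → m ≤ b1 T r := by
    intro T hT r hr h1 h2
    have := (hN' T hT r hr ((le_max_left _ _).trans h1) ((le_max_left _ _).trans h2)).1
    rw [abs_lt] at this
    rw [hmdef]
    linarith [this.1]
  -- pointwise exponential bound
  have hptwE : ∀ T : ℝ, 0 < T → ∀ t s : ℝ, 0 ≤ t → t ≤ s → s ≤ T →
      Real.exp ((∫ r in (0:ℝ)..t, b1 T r) - ∫ r in (0:ℝ)..s, b1 T r)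
        ≤ Real.exp D * Real.exp (-(m * (s - t))) := by
    intro T hT t s ht hts hsT
    exact myExpPtw hC0 hN00 hm.le (hc1 T hT) (hblow T hT) (hmid T hT) ht hts hsT
  -- part (i)
  have hi : ∀ T : ℝ, 0 < T → ∀ t ∈ Set.Icc (0 : ℝ) T, |v T t| ≤ Real.exp D * C / m := by
    intro T hT t ht
    set g : ℝ → ℝ := fun u => ∫ r in (0:ℝ)..u, b1 T r with hgdef
    have hgc : ContinuousOn g (Set.Icc 0 T) := myPrimCont hT.le (hc1 T hT)
    have hsol : v T t = ∫ s in t..T, Real.exp (g t - g s) * b2 T s :=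
      mySol hT (hc1 T hT) (hc2 T hT) (hvsol T hT).1 (hvsol T hT).2 ht
    have hcont : ContinuousOn (fun s => Real.exp (g t - g s) * b2 T s) (Set.Icc 0 T) :=
      ((continuousOn_const.sub hgc).rexp).mul (hc2 T hT)
    have hFi : IntervalIntegrable (fun s => Real.exp (g t - g s) * b2 T s) volume t T := by
      apply ContinuousOn.intervalIntegrable
      apply hcont.mono
      rw [Set.uIcc_of_le ht.2]; exact Set.Icc_subset_Icc ht.1 le_rfl
    have hptw : ∀ s ∈ Set.Icc t T, |Real.exp (g t - g s) * b2 T s|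
        ≤ (Real.exp D * C) * Real.exp (-(m * (s - t))) := by
      intro s hs
      have hs0T : s ∈ Set.Icc (0:ℝ) T := ⟨ht.1.trans hs.1, hs.2⟩
      rw [abs_mul, abs_of_pos (Real.exp_pos _)]
      have h1 := hptwE T hT t s ht.1 hs.1 hs.2
      have h2 := (hC T hT s hs0T).2
      have h3 := Real.exp_pos (-(m * (s - t)))
      have h4 := Real.exp_pos (g t - g s)
      have h5 := abs_nonneg (b2 T s)
      nlinarith
    have := myIntEst ht.2 hm hFi hptw
    rw [← hsol] at this
    calc |v T t| ≤ Real.exp D * C * Real.exp (-(m * (t - t))) / m := this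
      _ = Real.exp D * C / m := by rw [sub_self, mul_zero, neg_zero, Real.exp_zero, mul_one]
  -- part (ii)
  have hii : ∀ ε : ℝ, 0 < ε → ∃ N : ℝ, ∀ T : ℝ, 0 < T → ∀ t ∈ Set.Icc (0 : ℝ) T,
      N ≤ t → N ≤ T - t → |v T t - vbar| < ε := by
    intro ε hε
    have hvb : 0 < 1 + |vbar| := by positivity
    set ε' : ℝ := ε * m / (3 * Real.exp D * (1 + |vbar|)) with hε'def
    have hε' : 0 < ε' := by positivity
    obtain ⟨N1, hN1⟩ := hconv ε' hε'
    set Nε : ℝ := max N1 0 with hNεdef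
    have hNε0 : 0 ≤ Nε := le_max_right _ _
    set K : ℝ := Real.exp D * C * (1 + |vbar|) * Nε * Real.exp (m * Nε)
      + |vbar| * Real.exp D with hKdef
    -- choose Nc
    have htend : Filter.Tendsto (fun x : ℝ => K * Real.exp (-(m * x)))
        Filter.atTop (nhds 0) := by
      have h1 : Filter.Tendsto (fun x : ℝ => m * x) Filter.atTop Filter.atTop :=
        Filter.Tendsto.const_mul_atTop hm Filter.tendsto_id
      have h2 : Filter.Tendsto (fun x : ℝ => -(m * x)) Filter.atTop Filter.atBot :=
        Filter.tendsto_neg_atTop_atBot.comp h1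
      have h3 := Real.tendsto_exp_atBot.comp h2
      have h4 := h3.const_mul K
      simpa using h4
    obtain ⟨Nc, hNcNε, hNcK⟩ :
        ∃ Nc : ℝ, Nε ≤ Nc ∧ K * Real.exp (-(m * Nc)) < ε / 3 := by
      have h2 := (htend.eventually (gt_mem_nhds (show 0 < ε / 3 by positivity))).and
        (Filter.eventually_ge_atTop Nε)
      obtain ⟨Nc, h3, h4⟩ := h2.exists
      exact ⟨Nc, h4, h3⟩
    refine ⟨Nc, ?_⟩
    intro T hT t ht htc httc
    have hNεNc : Nε ≤ Nc := hNcNε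
    set g : ℝ → ℝ := fun u => ∫ r in (0:ℝ)..u, b1 T r with hgdef
    have hgc : ContinuousOn g (Set.Icc 0 T) := myPrimCont hT.le (hc1 T hT)
    set q : ℝ := T - Nε with hqdef
    have htq : t ≤ q := by simp only [hqdef]; linarith
    have hqT : q ≤ T := by simp only [hqdef]; linarith
    have hq0T : q ∈ Set.Icc (0:ℝ) T := ⟨ht.1.trans htq, hqT⟩
    have hsubI : ∀ {a b : ℝ}, t ≤ a → a ≤ b → b ≤ T → Set.uIcc a b ⊆ Set.Icc 0 T := by
      intro a b ha hab hbT
      rw [Set.uIcc_of_le hab]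
      exact Set.Icc_subset_Icc (ht.1.trans ha) hbT
    -- continuity of integrands
    have hcF : ContinuousOn (fun s => Real.exp (g t - g s) * (b2 T s - vbar * b1 T s))
        (Set.Icc 0 T) := ((continuousOn_const.sub hgc).rexp).mul
          ((hc2 T hT).sub (continuousOn_const.mul (hc1 T hT)))
    have hcG : ContinuousOn (fun s => Real.exp (g t - g s) * b2 T s) (Set.Icc 0 T) :=
      ((continuousOn_const.sub hgc).rexp).mul (hc2 T hT)
    have hcH : ContinuousOn (fun s => b1 T s * Real.exp (g t - g s)) (Set.Icc 0 T) :=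
      (hc1 T hT).mul ((continuousOn_const.sub hgc).rexp)
    -- the identity
    have hident : v T t - vbar
        = ((∫ s in t..q, Real.exp (g t - g s) * (b2 T s - vbar * b1 T s))
          + ∫ s in q..T, Real.exp (g t - g s) * (b2 T s - vbar * b1 T s))
          - vbar * Real.exp (g t - g T) := by
      have hsol : v T t = ∫ s in t..T, Real.exp (g t - g s) * b2 T s :=
        mySol hT (hc1 T hT) (hc2 T hT) (hvsol T hT).1 (hvsol T hT).2 ht
      have hid : ∫ s in t..T, b1 T s * Real.exp (g t - g s)
          = 1 - Real.exp (g t - g T) := myIdent hT (hc1 T hT) ht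
      have hint1 : IntervalIntegrable (fun s => Real.exp (g t - g s) * b2 T s) volume t T :=
        (hcG.mono (hsubI le_rfl ht.2 le_rfl)).intervalIntegrable
      have hint2 : IntervalIntegrable (fun s => b1 T s * Real.exp (g t - g s)) volume t T :=
        (hcH.mono (hsubI le_rfl ht.2 le_rfl)).intervalIntegrable
      have hsplit : (∫ s in t..q, Real.exp (g t - g s) * (b2 T s - vbar * b1 T s))
          + ∫ s in q..T, Real.exp (g t - g s) * (b2 T s - vbar * b1 T s)
          = ∫ s in t..T, Real.exp (g t - g s) * (b2 T s - vbar * b1 T s) :=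
        intervalIntegral.integral_add_adjacent_intervals
          ((hcF.mono (hsubI le_rfl htq hqT)).intervalIntegrable)
          ((hcF.mono (hsubI htq hqT le_rfl)).intervalIntegrable)
      rw [hsplit]
      have hcomb : (∫ s in t..T, Real.exp (g t - g s) * (b2 T s - vbar * b1 T s))
          = (∫ s in t..T, Real.exp (g t - g s) * b2 T s)
            - vbar * ∫ s in t..T, b1 T s * Real.exp (g t - g s) := by
        rw [← intervalIntegral.integral_const_mul,
          ← intervalIntegral.integral_sub hint1 (hint2.const_mul vbar)]
        congr 1
        funext s
        ring
      rw [hcomb, hid, ← hsol]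
      ring
    -- bound term 1
    have hB1 : |∫ s in t..q, Real.exp (g t - g s) * (b2 T s - vbar * b1 T s)| ≤ ε / 3 := by
      have hptw : ∀ s ∈ Set.Icc t q, |Real.exp (g t - g s) * (b2 T s - vbar * b1 T s)|
          ≤ (Real.exp D * ((1 + |vbar|) * ε')) * Real.exp (-(m * (s - t))) := by
        intro s hs
        have hs0T : s ∈ Set.Icc (0:ℝ) T := ⟨ht.1.trans hs.1, hs.2.trans hqT⟩
        have hgood := hN1 T hT s hs0T
          (((le_max_left _ _).trans hNεNc).trans (htc.trans hs.1))
          ((le_max_left _ _).trans (by simp only [hqdef] at hs; linarith [hs.2]))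
        have habs : |b2 T s - vbar * b1 T s| ≤ (1 + |vbar|) * ε' := by
          have h0 : b2 T s - vbar * b1 T s = (b2 T s - bb2) - vbar * (b1 T s - bb1) := by
            rw [hvbar]; field_simp; ring
          rw [h0]
          calc |(b2 T s - bb2) - vbar * (b1 T s - bb1)|
              ≤ |b2 T s - bb2| + |vbar * (b1 T s - bb1)| := abs_sub _ _
            _ = |b2 T s - bb2| + |vbar| * |b1 T s - bb1| := by rw [abs_mul]
            _ ≤ (1 + |vbar|) * ε' := by
                nlinarith [hgood.1, hgood.2, abs_nonneg vbar, abs_nonneg (b1 T s - bb1), abs_nonneg (b2 T s - bb2)]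
        rw [abs_mul, abs_of_pos (Real.exp_pos _)]
        have h1 := hptwE T hT t s ht.1 hs.1 hs0T.2
        have h5 := abs_nonneg (b2 T s - vbar * b1 T s)
        calc Real.exp (g t - g s) * |b2 T s - vbar * b1 T s|
            ≤ (Real.exp D * Real.exp (-(m * (s - t)))) * ((1 + |vbar|) * ε') :=
              mul_le_mul h1 habs h5 (by positivity)
          _ = (Real.exp D * ((1 + |vbar|) * ε')) * Real.exp (-(m * (s - t))) := by ring
      have h := myIntEst htq hm
        ((hcF.mono (hsubI le_rfl htq hqT)).intervalIntegrable) hptw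
      calc |∫ s in t..q, Real.exp (g t - g s) * (b2 T s - vbar * b1 T s)|
          ≤ Real.exp D * ((1 + |vbar|) * ε') * Real.exp (-(m * (t - t))) / m := h
        _ = ε / 3 := by
            rw [sub_self, mul_zero, neg_zero, Real.exp_zero, mul_one, hε'def]
            field_simp
    -- bound term 2
    have hB2 : |∫ s in q..T, Real.exp (g t - g s) * (b2 T s - vbar * b1 T s)|
        ≤ Nε * (Real.exp D * C * (1 + |vbar|) * Real.exp (-(m * (q - t)))) := by
      have hb : ∀ s ∈ Set.uIoc q T, ‖Real.exp (g t - g s) * (b2 T s - vbar * b1 T s)‖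
          ≤ Real.exp D * C * (1 + |vbar|) * Real.exp (-(m * (q - t))) := by
        intro s hs
        rw [Set.uIoc_of_le hqT] at hs
        have hs0T : s ∈ Set.Icc (0:ℝ) T := ⟨ht.1.trans (htq.trans hs.1.le), hs.2⟩
        have habs : |b2 T s - vbar * b1 T s| ≤ C * (1 + |vbar|) := by
          calc |b2 T s - vbar * b1 T s| ≤ |b2 T s| + |vbar| * |b1 T s| := by
                rw [← abs_mul]; exact abs_sub _ _
            _ ≤ C * (1 + |vbar|) := by
                nlinarith [(hC T hT s hs0T).1, (hC T hT s hs0T).2, abs_nonneg vbar,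
                  abs_nonneg (b1 T s)]
        have h1 := hptwE T hT t s ht.1 (htq.trans hs.1.le) hs.2
        have hexpmono : Real.exp (-(m * (s - t))) ≤ Real.exp (-(m * (q - t))) := by
          apply Real.exp_le_exp.2
          nlinarith [hs.1.le, hm.le, mul_le_mul_of_nonneg_left hs.1.le hm.le]
        rw [Real.norm_eq_abs, abs_mul, abs_of_pos (Real.exp_pos _)]
        have h5 := abs_nonneg (b2 T s - vbar * b1 T s)
        calc Real.exp (g t - g s) * |b2 T s - vbar * b1 T s|
            ≤ (Real.exp D * Real.exp (-(m * (s - t)))) * (C * (1 + |vbar|)) :=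
              mul_le_mul h1 habs h5 (by positivity)
          _ ≤ (Real.exp D * Real.exp (-(m * (q - t)))) * (C * (1 + |vbar|)) := by
              have : (0:ℝ) ≤ Real.exp D * (C * (1 + |vbar|)) := by positivity
              nlinarith [hexpmono, Real.exp_pos D, mul_nonneg hC0 hvb.le, Real.exp_pos (-(m * (q - t))), Real.exp_pos (-(m * (s - t)))]
          _ = Real.exp D * C * (1 + |vbar|) * Real.exp (-(m * (q - t))) := by ring
      have := intervalIntegral.norm_integral_le_of_norm_le_const hb
      rw [Real.norm_eq_abs] at this
      calc |∫ s in q..T, Real.exp (g t - g s) * (b2 T s - vbar * b1 T s)|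
          ≤ |T - q| * (Real.exp D * C * (1 + |vbar|) * Real.exp (-(m * (q - t)))) := by
            linarith [this]
        _ = Nε * (Real.exp D * C * (1 + |vbar|) * Real.exp (-(m * (q - t)))) := by
            rw [hqdef]; rw [abs_of_nonneg (by linarith : (0:ℝ) ≤ T - (T - Nε))]
            ring_nf
    -- bound term 3
    have hB3 : |vbar * Real.exp (g t - g T)|
        ≤ |vbar| * (Real.exp D * Real.exp (-(m * (T - t)))) := by
      rw [abs_mul, abs_of_pos (Real.exp_pos _)]
      exact mul_le_mul_of_nonneg_left
        (hptwE T hT t T ht.1 ht.2 le_rfl) (abs_nonneg _)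
    -- final arithmetic
    have e1 : Real.exp (-(m * (q - t))) ≤ Real.exp (m * Nε) * Real.exp (-(m * Nc)) := by
      rw [← Real.exp_add]
      apply Real.exp_le_exp.2
      have := mul_le_mul_of_nonneg_left (show Nc - Nε ≤ q - t by simp only [hqdef]; linarith)
        hm.le
      nlinarith
    have e2 : Real.exp (-(m * (T - t))) ≤ Real.exp (-(m * Nc)) := by
      apply Real.exp_le_exp.2
      nlinarith [mul_le_mul_of_nonneg_left httc hm.le]
    have hKpos : 0 ≤ Real.exp D * C * (1 + |vbar|) * Nε := by positivity
    have hfin : |v T t - vbar| ≤ ε / 3 + K * Real.exp (-(m * Nc)) := by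
      rw [hident]
      calc |((∫ s in t..q, Real.exp (g t - g s) * (b2 T s - vbar * b1 T s))
            + ∫ s in q..T, Real.exp (g t - g s) * (b2 T s - vbar * b1 T s))
            - vbar * Real.exp (g t - g T)|
          ≤ |(∫ s in t..q, Real.exp (g t - g s) * (b2 T s - vbar * b1 T s))
            + ∫ s in q..T, Real.exp (g t - g s) * (b2 T s - vbar * b1 T s)|
            + |vbar * Real.exp (g t - g T)| := abs_sub _ _
        _ ≤ |∫ s in t..q, Real.exp (g t - g s) * (b2 T s - vbar * b1 T s)|
            + |∫ s in q..T, Real.exp (g t - g s) * (b2 T s - vbar * b1 T s)|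
            + |vbar * Real.exp (g t - g T)| := by
              linarith [abs_add_le (∫ s in t..q, Real.exp (g t - g s) * (b2 T s - vbar * b1 T s))
                (∫ s in q..T, Real.exp (g t - g s) * (b2 T s - vbar * b1 T s))]
        _ ≤ ε / 3 + K * Real.exp (-(m * Nc)) := by
            have hm1 := mul_le_mul_of_nonneg_left e1 hKpos
            have hm2 := mul_le_mul_of_nonneg_left e2 (mul_nonneg (abs_nonneg vbar)
              (Real.exp_pos D).le)
            rw [hKdef]
            nlinarith [hB1, hB2, hB3]
    linarith
  refine ⟨⟨Real.exp D * C / m, hi⟩, hii, ?_⟩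
  intro δ ε2 hδ hε2 hδε
  rw [Metric.tendsto_atTop]
  intro η hη
  obtain ⟨N, hN⟩ := hii (η / 2) (by positivity)
  refine ⟨max (max (N / δ) (N / ε2)) 1, ?_⟩
  intro T hTM
  have hT : 0 < T := lt_of_lt_of_le one_pos ((le_max_right _ _).trans hTM)
  have h1T : N / δ ≤ T := ((le_max_left _ _).trans (le_max_left _ _)).trans hTM
  have h2T : N / ε2 ≤ T := ((le_max_right _ _).trans (le_max_left _ _)).trans hTM
  have hδT : N ≤ δ * T := by
    rw [div_le_iff₀ hδ] at h1T
    nlinarith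
  have hεT : N ≤ ε2 * T := by
    rw [div_le_iff₀ hε2] at h2T
    nlinarith
  rw [dist_zero_right, Real.norm_eq_abs]
  have hs_nonneg : (0:ℝ) ≤ ⨆ t ∈ Set.Icc (δ * T) ((1 - ε2) * T), |v T t - vbar| :=
    Real.iSup_nonneg fun t => Real.iSup_nonneg fun _ => abs_nonneg _
  have hs_le : (⨆ t ∈ Set.Icc (δ * T) ((1 - ε2) * T), |v T t - vbar|) ≤ η / 2 := by
    apply Real.iSup_le _ (by positivity)
    intro t
    apply Real.iSup_le _ (by positivity)
    intro htmem
    have ht0T : t ∈ Set.Icc (0:ℝ) T :=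
      ⟨le_trans (by positivity) htmem.1, le_trans htmem.2 (by nlinarith)⟩
    exact (hN T hT t ht0T (hδT.trans htmem.1) (by nlinarith [htmem.2, hεT])).le
  rw [abs_of_nonneg hs_nonneg]
  linarith
end

section
/- Let n ≥ 1 and for j = 1,…,n fix qⱼ > 0, pⱼ ≥ 0, and λ̄ⱼ ∈ ℝ, let r̄ ≥ 0, and define Λ(α) := r̄·α + ½·Σⱼ Fⱼ(α) + ½·Σⱼ Gⱼ(α) for α ∈ (0,1). Then Λ is differentiable on (0,1), the right-hand limit of the derivative satisfies lim_{α↓0} Λ′(α) = c̄, where c̄ := r̄ + ¼·Σⱼ pⱼ²/(pⱼ+qⱼ) + ½·Σⱼ λ̄ⱼ²; and if moreover either some λ̄ⱼ ≠ 0 or some pⱼ > 0, then lim_{α↑1} Λ′(α) = +∞. -/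
open Real Filter Set Finset

private lemma aux_den_pos {a b : ℝ} (ha : 0 ≤ a) (hb : 0 < b) {α : ℝ} (hα : α < 1) :
    0 < (a + b) ^ 2 - α * b ^ 2 := by
  nlinarith [sq_nonneg a, mul_nonneg ha hb.le, mul_pos (sub_pos.2 hα) (mul_pos hb hb)]

private lemma auxF_deriv {a b l : ℝ} (ha : 0 ≤ a) (hb : 0 < b) {α : ℝ} (hα : α < 1) :
    HasDerivAt (fun x => (a + b) ^ 2 * l ^ 2 * x / ((1 - x) * (a + b) ^ 2 + x * a * (a + 2 * b)))
      ((a + b) ^ 4 * l ^ 2 / ((a + b) ^ 2 - α * b ^ 2) ^ 2) α := by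
  have hD : ∀ x : ℝ, (1 - x) * (a + b) ^ 2 + x * a * (a + 2 * b) = (a + b) ^ 2 - x * b ^ 2 := by
    intro x; ring
  have hpos := aux_den_pos ha hb hα
  have hne : (1 - α) * (a + b) ^ 2 + α * a * (a + 2 * b) ≠ 0 := by rw [hD]; exact hpos.ne'
  have hnum : HasDerivAt (fun x : ℝ => (a + b) ^ 2 * l ^ 2 * x) ((a + b) ^ 2 * l ^ 2) α := by
    simpa using (hasDerivAt_id α).const_mul ((a + b) ^ 2 * l ^ 2)
  have hden : HasDerivAt (fun x : ℝ => (1 - x) * (a + b) ^ 2 + x * a * (a + 2 * b))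
      ((-1) * (a + b) ^ 2 + 1 * a * (a + 2 * b)) α := by
    have h1 : HasDerivAt (fun x : ℝ => (1 - x) * (a + b) ^ 2) ((-1) * (a + b) ^ 2) α := by
      simpa using ((hasDerivAt_id α).const_sub 1).mul_const ((a + b) ^ 2)
    have h2 : HasDerivAt (fun x : ℝ => x * a * (a + 2 * b)) (1 * a * (a + 2 * b)) α := by
      simpa using ((hasDerivAt_id α).mul_const a).mul_const (a + 2 * b)
    exact h1.add h2
  have h := hnum.div hden hne
  refine h.congr_deriv ?_
  rw [hD α, div_eq_div_iff (by positivity) (by positivity)]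
  ring

private lemma auxG_deriv {a b : ℝ} (ha : 0 ≤ a) (hb : 0 < b) {α : ℝ} (hα : α < 1) :
    HasDerivAt (fun x => (a + b) - b * x - Real.sqrt (1 - x) *
        Real.sqrt ((1 - x) * (a + b) ^ 2 + x * a * (a + 2 * b)))
      (-b + ((a + b) ^ 2 + b ^ 2 - 2 * α * b ^ 2)
          / (2 * Real.sqrt ((1 - α) * ((a + b) ^ 2 - α * b ^ 2)))) α := by
  have hpos := aux_den_pos ha hb hα
  have hH : 0 < (1 - α) * ((a + b) ^ 2 - α * b ^ 2) := mul_pos (by linarith) hpos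
  have hsq : 0 < Real.sqrt ((1 - α) * ((a + b) ^ 2 - α * b ^ 2)) := Real.sqrt_pos.2 hH
  have heq : (fun x => (a + b) - b * x - Real.sqrt (1 - x) *
        Real.sqrt ((1 - x) * (a + b) ^ 2 + x * a * (a + 2 * b)))
      =ᶠ[nhds α] fun x => (a + b) - b * x - Real.sqrt ((1 - x) * ((a + b) ^ 2 - x * b ^ 2)) := by
    filter_upwards [Iio_mem_nhds hα] with x hx
    have h1x : (0 : ℝ) ≤ 1 - x := by
      have : x < 1 := hx
      linarith
    have hd : (1 - x) * (a + b) ^ 2 + x * a * (a + 2 * b) = (a + b) ^ 2 - x * b ^ 2 := by ring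
    rw [hd, ← Real.sqrt_mul h1x]
  have h2 : HasDerivAt (fun x : ℝ => (a + b) ^ 2 - x * b ^ 2) (-(1 * b ^ 2)) α := by
    simpa using ((hasDerivAt_id α).mul_const (b ^ 2)).const_sub ((a + b) ^ 2)
  have h1 : HasDerivAt (fun x : ℝ => 1 - x) (-1) α := by
    simpa using (hasDerivAt_id α).const_sub 1
  have hHd : HasDerivAt (fun x : ℝ => (1 - x) * ((a + b) ^ 2 - x * b ^ 2))
      ((-1) * ((a + b) ^ 2 - α * b ^ 2) + (1 - α) * -(1 * b ^ 2)) α := h1.mul h2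
  have hs := hHd.sqrt hH.ne'
  have hlin : HasDerivAt (fun x : ℝ => (a + b) - b * x) (-b) α := by
    simpa using ((hasDerivAt_id α).const_mul b).const_sub (a + b)
  have htot := hlin.sub hs
  have hfin := htot.congr_of_eventuallyEq heq
  refine hfin.congr_deriv ?_
  have e : (-1) * ((a + b) ^ 2 - α * b ^ 2) + (1 - α) * -(1 * b ^ 2)
      = -((a + b) ^ 2 + b ^ 2 - 2 * α * b ^ 2) := by ring
  rw [e, neg_div]
  ring

/-- Proposition 4.1: `Λ` is differentiable on `(0,1)`, `Λ′(0+) = c̄`, and if some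
`λ̄ⱼ ≠ 0` or some `pⱼ > 0`, then `Λ′(α) → ∞` as `α ↑ 1`. -/
theorem stmt_18 (n : ℕ) (hn : 1 ≤ n) (p q lam : Fin n → ℝ)
    (hq : ∀ j, 0 < q j) (hp : ∀ j, 0 ≤ p j)
    (rbar : ℝ) (hrbar : 0 ≤ rbar)
    (F G : Fin n → ℝ → ℝ) (Λ : ℝ → ℝ)
    (hF : ∀ j, ∀ α : ℝ, F j α
      = (p j + q j) ^ 2 * (lam j) ^ 2 * α
          / ((1 - α) * (p j + q j) ^ 2 + α * p j * (p j + 2 * q j)))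
    (hG : ∀ j, ∀ α : ℝ, G j α
      = (p j + q j) - q j * α
          - Real.sqrt (1 - α)
            * Real.sqrt ((1 - α) * (p j + q j) ^ 2 + α * p j * (p j + 2 * q j)))
    (hΛ : ∀ α : ℝ, Λ α = rbar * α + (1 / 2) * ∑ j, F j α + (1 / 2) * ∑ j, G j α) :
    (∀ α ∈ Set.Ioo (0 : ℝ) 1, DifferentiableAt ℝ Λ α) ∧
    Filter.Tendsto (deriv Λ) (nhdsWithin 0 (Set.Ioo (0 : ℝ) 1))
      (nhds (rbar + (1 / 4) * ∑ j, (p j) ^ 2 / (p j + q j) + (1 / 2) * ∑ j, (lam j) ^ 2)) ∧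
    (((∃ j, lam j ≠ 0) ∨ (∃ j, 0 < p j)) →
      Filter.Tendsto (deriv Λ) (nhdsWithin 1 (Set.Ioo (0 : ℝ) 1)) Filter.atTop) := by
  obtain ⟨Fd, hFd_def⟩ : ∃ Fd : Fin n → ℝ → ℝ, Fd = fun j α =>
      (p j + q j) ^ 4 * (lam j) ^ 2 / ((p j + q j) ^ 2 - α * (q j) ^ 2) ^ 2 := ⟨_, rfl⟩
  obtain ⟨Gd, hGd_def⟩ : ∃ Gd : Fin n → ℝ → ℝ, Gd = fun j α =>
      -(q j) + ((p j + q j) ^ 2 + (q j) ^ 2 - 2 * α * (q j) ^ 2)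
        / (2 * Real.sqrt ((1 - α) * ((p j + q j) ^ 2 - α * (q j) ^ 2))) := ⟨_, rfl⟩
  obtain ⟨L, hL_def⟩ : ∃ L : ℝ → ℝ,
      L = fun α => rbar + (1 / 2) * ∑ j, Fd j α + (1 / 2) * ∑ j, Gd j α := ⟨_, rfl⟩
  have hpq : ∀ j, 0 < p j + q j := fun j => add_pos_of_nonneg_of_pos (hp j) (hq j)
  have hasDerivΛ : ∀ α ∈ Set.Ioo (0 : ℝ) 1, HasDerivAt Λ (L α) α := by
    intro α hα
    have hΛfun : Λ = fun x => rbar * x + (1 / 2) * ∑ j, F j x + (1 / 2) * ∑ j, G j x :=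
      funext hΛ
    rw [hΛfun]
    have h1 : HasDerivAt (fun x : ℝ => rbar * x) rbar α := by
      simpa using (hasDerivAt_id α).const_mul rbar
    have hFj : ∀ j, HasDerivAt (F j) (Fd j α) α := by
      intro j
      have : F j = fun x => (p j + q j) ^ 2 * (lam j) ^ 2 * x
          / ((1 - x) * (p j + q j) ^ 2 + x * p j * (p j + 2 * q j)) := funext (hF j)
      rw [this, hFd_def]
      exact auxF_deriv (hp j) (hq j) hα.2
    have hGj : ∀ j, HasDerivAt (G j) (Gd j α) α := by
      intro j
      have : G j = fun x => (p j + q j) - q j * x - Real.sqrt (1 - x)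
          * Real.sqrt ((1 - x) * (p j + q j) ^ 2 + x * p j * (p j + 2 * q j)) := funext (hG j)
      rw [this, hGd_def]
      exact auxG_deriv (hp j) (hq j) hα.2
    have h2 : HasDerivAt (fun x => (1 / 2 : ℝ) * ∑ j, F j x) ((1 / 2) * ∑ j, Fd j α) α :=
      (HasDerivAt.fun_sum fun j _ => hFj j).const_mul (1 / 2)
    have h3 : HasDerivAt (fun x => (1 / 2 : ℝ) * ∑ j, G j x) ((1 / 2) * ∑ j, Gd j α) α :=
      (HasDerivAt.fun_sum fun j _ => hGj j).const_mul (1 / 2)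
    have := (h1.fun_add h2).fun_add h3
    simpa only [hL_def] using this
  refine ⟨fun α hα => (hasDerivΛ α hα).differentiableAt, ?_, ?_⟩
  · -- limit at 0
    have hev : deriv Λ =ᶠ[nhdsWithin 0 (Set.Ioo (0 : ℝ) 1)] L := by
      filter_upwards [self_mem_nhdsWithin] with α hα
      exact (hasDerivΛ α hα).deriv
    have hFt : ∀ j, Filter.Tendsto (fun α => Fd j α) (nhdsWithin 0 (Set.Ioo (0 : ℝ) 1))
        (nhds ((lam j) ^ 2)) := by
      intro j
      have hc : ContinuousAt (fun α => Fd j α) 0 := by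
        rw [hFd_def]
        apply ContinuousAt.div continuousAt_const (by fun_prop)
        simp only [zero_mul, sub_zero]
        exact pow_ne_zero _ (pow_ne_zero _ (hpq j).ne')
      have h : Filter.Tendsto (fun α => Fd j α) (nhdsWithin 0 (Set.Ioo (0 : ℝ) 1))
          (nhds (Fd j 0)) := hc.tendsto.mono_left nhdsWithin_le_nhds
      have e : Fd j 0 = (lam j) ^ 2 := by
        simp only [hFd_def, zero_mul, sub_zero]
        field_simp [(hpq j).ne']
      rwa [e] at h
    have hGt : ∀ j, Filter.Tendsto (fun α => Gd j α) (nhdsWithin 0 (Set.Ioo (0 : ℝ) 1))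
        (nhds ((1 / 2) * ((p j) ^ 2 / (p j + q j)))) := by
      intro j
      have hc : ContinuousAt (fun α => Gd j α) 0 := by
        rw [hGd_def]
        apply ContinuousAt.add continuousAt_const
        apply ContinuousAt.div (by fun_prop) (by fun_prop)
        have : (1 - (0:ℝ)) * ((p j + q j) ^ 2 - 0 * (q j) ^ 2) = (p j + q j) ^ 2 := by ring
        rw [this, Real.sqrt_sq (hpq j).le]
        exact mul_ne_zero two_ne_zero (hpq j).ne'
      have h : Filter.Tendsto (fun α => Gd j α) (nhdsWithin 0 (Set.Ioo (0 : ℝ) 1))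
          (nhds (Gd j 0)) := hc.tendsto.mono_left nhdsWithin_le_nhds
      have e : Gd j 0 = (1 / 2) * ((p j) ^ 2 / (p j + q j)) := by
        simp only [hGd_def]
        rw [show (1 - (0:ℝ)) * ((p j + q j) ^ 2 - 0 * (q j) ^ 2) = (p j + q j) ^ 2 by ring,
          Real.sqrt_sq (hpq j).le]
        field_simp [(hpq j).ne']
        ring
      rwa [e] at h
    have hLsum : Filter.Tendsto L (nhdsWithin 0 (Set.Ioo (0 : ℝ) 1))
        (nhds (rbar + (1 / 2) * ∑ j, (lam j) ^ 2
          + (1 / 2) * ∑ j, (1 / 2) * ((p j) ^ 2 / (p j + q j)))) := by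
      rw [hL_def]
      exact (tendsto_const_nhds.add ((tendsto_finset_sum _ fun j _ => hFt j).const_mul _)).add
        ((tendsto_finset_sum _ fun j _ => hGt j).const_mul _)
    have hval : rbar + (1 / 2) * ∑ j, (lam j) ^ 2
        + (1 / 2) * ∑ j, (1 / 2) * ((p j) ^ 2 / (p j + q j))
        = rbar + (1 / 4) * ∑ j, (p j) ^ 2 / (p j + q j) + (1 / 2) * ∑ j, (lam j) ^ 2 := by
      rw [← Finset.mul_sum]
      ring
    rw [hval] at hLsum
    exact hLsum.congr' hev.symm
  · -- limit at 1
    intro hyp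
    have hFd0 : ∀ j, ∀ α ∈ Set.Ioo (0 : ℝ) 1, 0 ≤ Fd j α := by
      intro j α hα
      have := aux_den_pos (hp j) (hq j) hα.2
      rw [hFd_def]
      positivity
    have hGdb : ∀ j, ∀ α ∈ Set.Ioo (0 : ℝ) 1, -(q j) ≤ Gd j α := by
      intro j α hα
      have hd := aux_den_pos (hp j) (hq j) hα.2
      have hnum : 0 ≤ (p j + q j) ^ 2 + (q j) ^ 2 - 2 * α * (q j) ^ 2 := by
        nlinarith [sq_nonneg (p j), mul_nonneg (hp j) (hq j).le,
          mul_nonneg (sub_nonneg.2 hα.2.le) (sq_nonneg (q j))]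
      have hfr : 0 ≤ ((p j + q j) ^ 2 + (q j) ^ 2 - 2 * α * (q j) ^ 2)
          / (2 * Real.sqrt ((1 - α) * ((p j + q j) ^ 2 - α * (q j) ^ 2))) :=
        div_nonneg hnum (by positivity)
      rw [hGd_def]
      simp only
      linarith
    obtain ⟨j₀, hdiv⟩ : ∃ j₀, Filter.Tendsto (fun α => Fd j₀ α + Gd j₀ α)
        (nhdsWithin 1 (Set.Ioo (0 : ℝ) 1)) Filter.atTop := by
      by_cases hpc : ∃ j, 0 < p j
      · obtain ⟨j₀, hpj⟩ := hpc
        refine ⟨j₀, ?_⟩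
        have hc : (0 : ℝ) < (p j₀ + q j₀) ^ 2 - (q j₀) ^ 2 := by nlinarith [hq j₀]
        have hN : Filter.Tendsto (fun α : ℝ => (p j₀ + q j₀) ^ 2 + (q j₀) ^ 2 - 2 * α * (q j₀) ^ 2)
            (nhdsWithin 1 (Set.Ioo (0 : ℝ) 1)) (nhds ((p j₀ + q j₀) ^ 2 - (q j₀) ^ 2)) := by
          have hcont : ContinuousAt
              (fun α : ℝ => (p j₀ + q j₀) ^ 2 + (q j₀) ^ 2 - 2 * α * (q j₀) ^ 2) 1 := by fun_prop
          have h : Filter.Tendsto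
              (fun α : ℝ => (p j₀ + q j₀) ^ 2 + (q j₀) ^ 2 - 2 * α * (q j₀) ^ 2)
              (nhdsWithin 1 (Set.Ioo (0 : ℝ) 1))
              (nhds ((p j₀ + q j₀) ^ 2 + (q j₀) ^ 2 - 2 * 1 * (q j₀) ^ 2)) :=
            hcont.tendsto.mono_left nhdsWithin_le_nhds
          have e : (p j₀ + q j₀) ^ 2 + (q j₀) ^ 2 - 2 * 1 * (q j₀) ^ 2
              = (p j₀ + q j₀) ^ 2 - (q j₀) ^ 2 := by ring
          rwa [e] at h
        have hden : Filter.Tendsto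
            (fun α : ℝ => 2 * Real.sqrt ((1 - α) * ((p j₀ + q j₀) ^ 2 - α * (q j₀) ^ 2)))
            (nhdsWithin 1 (Set.Ioo (0 : ℝ) 1)) (nhdsWithin 0 (Set.Ioi (0:ℝ))) := by
          rw [tendsto_nhdsWithin_iff]
          constructor
          · have hcont : ContinuousAt
                (fun α : ℝ => 2 * Real.sqrt ((1 - α) * ((p j₀ + q j₀) ^ 2 - α * (q j₀) ^ 2))) 1 := by
              fun_prop
            have h : Filter.Tendsto
                (fun α : ℝ => 2 * Real.sqrt ((1 - α) * ((p j₀ + q j₀) ^ 2 - α * (q j₀) ^ 2)))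
                (nhdsWithin 1 (Set.Ioo (0 : ℝ) 1))
                (nhds (2 * Real.sqrt ((1 - (1:ℝ)) * ((p j₀ + q j₀) ^ 2 - 1 * (q j₀) ^ 2)))) :=
              hcont.tendsto.mono_left nhdsWithin_le_nhds
            have e : 2 * Real.sqrt ((1 - (1:ℝ)) * ((p j₀ + q j₀) ^ 2 - 1 * (q j₀) ^ 2)) = 0 := by
              norm_num
            rwa [e] at h
          · filter_upwards [self_mem_nhdsWithin] with α hα
            have := aux_den_pos (hp j₀) (hq j₀) hα.2
            have h1 : (0:ℝ) < 1 - α := by linarith [hα.2]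
            exact Set.mem_Ioi.2 (by positivity)
        have hGtop : Filter.Tendsto (fun α => Gd j₀ α)
            (nhdsWithin 1 (Set.Ioo (0 : ℝ) 1)) Filter.atTop := by
          have hfrac := Filter.Tendsto.pos_mul_atTop hc hN hden.inv_tendsto_nhdsGT_zero
          have hfrac' : Filter.Tendsto (fun α : ℝ =>
              ((p j₀ + q j₀) ^ 2 + (q j₀) ^ 2 - 2 * α * (q j₀) ^ 2)
              / (2 * Real.sqrt ((1 - α) * ((p j₀ + q j₀) ^ 2 - α * (q j₀) ^ 2))))
              (nhdsWithin 1 (Set.Ioo (0 : ℝ) 1)) Filter.atTop := by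
            simpa [div_eq_mul_inv] using hfrac
          simpa [hGd_def] using tendsto_atTop_add_const_left _ (-(q j₀)) hfrac'
        apply tendsto_atTop_mono' _ ?_ hGtop
        filter_upwards [self_mem_nhdsWithin] with α hα
        have := hFd0 j₀ α hα
        linarith
      · push_neg at hpc
        have hp0 : ∀ j, p j = 0 := fun j => le_antisymm (hpc j) (hp j)
        obtain ⟨j₀, hl⟩ : ∃ j, lam j ≠ 0 := by
          rcases hyp with h | ⟨j, hj⟩
          · exact h
          · exact absurd hj (not_lt.2 (hpc j))
        refine ⟨j₀, ?_⟩
        have hcnum : (0 : ℝ) < (p j₀ + q j₀) ^ 4 * (lam j₀) ^ 2 :=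
          mul_pos (pow_pos (hpq j₀) 4) (pow_two_pos_of_ne_zero hl)
        have hdenF : Filter.Tendsto (fun α : ℝ => ((p j₀ + q j₀) ^ 2 - α * (q j₀) ^ 2) ^ 2)
            (nhdsWithin 1 (Set.Ioo (0 : ℝ) 1)) (nhdsWithin 0 (Set.Ioi (0:ℝ))) := by
          rw [tendsto_nhdsWithin_iff]
          constructor
          · have hcont : ContinuousAt
                (fun α : ℝ => ((p j₀ + q j₀) ^ 2 - α * (q j₀) ^ 2) ^ 2) 1 := by fun_prop
            have h : Filter.Tendsto (fun α : ℝ => ((p j₀ + q j₀) ^ 2 - α * (q j₀) ^ 2) ^ 2)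
                (nhdsWithin 1 (Set.Ioo (0 : ℝ) 1))
                (nhds (((p j₀ + q j₀) ^ 2 - 1 * (q j₀) ^ 2) ^ 2)) :=
              hcont.tendsto.mono_left nhdsWithin_le_nhds
            have e : ((p j₀ + q j₀) ^ 2 - 1 * (q j₀) ^ 2) ^ 2 = 0 := by
              rw [hp0 j₀]; ring
            rwa [e] at h
          · filter_upwards [self_mem_nhdsWithin] with α hα
            exact Set.mem_Ioi.2 (pow_pos (aux_den_pos (hp j₀) (hq j₀) hα.2) 2)
        have hFtop : Filter.Tendsto (fun α => Fd j₀ α)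
            (nhdsWithin 1 (Set.Ioo (0 : ℝ) 1)) Filter.atTop := by
          have h := Filter.Tendsto.pos_mul_atTop hcnum tendsto_const_nhds hdenF.inv_tendsto_nhdsGT_zero
          simpa [hFd_def, div_eq_mul_inv] using h
        apply tendsto_atTop_mono' _ ?_ (tendsto_atTop_add_const_right _ (-(q j₀)) hFtop)
        filter_upwards [self_mem_nhdsWithin] with α hα
        have := hGdb j₀ α hα
        linarith
    have hlow : ∀ α ∈ Set.Ioo (0 : ℝ) 1,
        (1 / 2) * (Fd j₀ α + Gd j₀ α) - (1 / 2) * ∑ j, q j ≤ L α := by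
      intro α hα
      have hFs : Fd j₀ α ≤ ∑ j, Fd j α :=
        Finset.single_le_sum (fun j _ => hFd0 j α hα) (Finset.mem_univ j₀)
      have hGs : Gd j₀ α - ∑ j, q j ≤ ∑ j, Gd j α := by
        have h1 : ∑ j, Gd j α = Gd j₀ α + ∑ j ∈ Finset.univ.erase j₀, Gd j α :=
          (Finset.add_sum_erase _ _ (Finset.mem_univ j₀)).symm
        have h2 : ∑ j ∈ Finset.univ.erase j₀, -(q j) ≤ ∑ j ∈ Finset.univ.erase j₀, Gd j α :=
          Finset.sum_le_sum (fun j _ => hGdb j α hα)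
        have h3 : ∑ j ∈ Finset.univ.erase j₀, q j ≤ ∑ j, q j :=
          Finset.sum_le_sum_of_subset_of_nonneg (Finset.subset_univ _)
            (fun j _ _ => (hq j).le)
        have h4 : ∑ j ∈ Finset.univ.erase j₀, -(q j) = -∑ j ∈ Finset.univ.erase j₀, q j := by
          simp
        linarith
      simp only [hL_def]
      linarith
    have htail : Filter.Tendsto
        (fun α => (1 / 2) * (Fd j₀ α + Gd j₀ α) - (1 / 2) * ∑ j, q j)
        (nhdsWithin 1 (Set.Ioo (0 : ℝ) 1)) Filter.atTop := by
      have h := hdiv.const_mul_atTop (show (0:ℝ) < 1 / 2 by norm_num)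
      simpa [sub_eq_add_neg] using tendsto_atTop_add_const_right _ (-((1 / 2) * ∑ j, q j)) h
    apply tendsto_atTop_mono' _ ?_ htail
    filter_upwards [self_mem_nhdsWithin] with α hα
    rw [(hasDerivΛ α hα).deriv]
    exact hlow α hα
end

section
/- Let n ≥ 1 and for j = 1,…,n fix qⱼ > 0, pⱼ ≥ 0, and λ̄ⱼ ∈ ℝ, let r̄ ≥ 0, and define Λ(α) := r̄·α + ½·Σⱼ Fⱼ(α) + ½·Σⱼ Gⱼ(α) for α ∈ (0,1). If pⱼ > 0 for all j = 1,…,n, then lim_{α↑1} (1−α)^{1/2}·Λ′(α) = ¼·Σⱼ √(pⱼ·(pⱼ+2qⱼ)); if instead there exists at least one j with pⱼ = 0 and λ̄ⱼ ≠ 0, then lim_{α↑1} (1−α)²·Λ′(α) = ½·Σ_{j : pⱼ = 0} λ̄ⱼ². -/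
private lemma aux_Epos (pj qj α : ℝ) (hq : 0 < qj) (hp : 0 ≤ pj) (hα : α ∈ Set.Ioo (0:ℝ) 1) :
    0 < (1 - α) * (pj + qj) ^ 2 + α * pj * (pj + 2 * qj) := by
  obtain ⟨h0, h1⟩ := hα
  have h2 : 0 < (pj + qj) ^ 2 := by positivity
  nlinarith [mul_nonneg (mul_nonneg h0.le hp) (by linarith : (0:ℝ) ≤ pj + 2*qj)]

private lemma aux_E' (pj qj α : ℝ) :
    HasDerivAt (fun β : ℝ => (1 - β) * (pj + qj) ^ 2 + β * pj * (pj + 2 * qj))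
      (-(pj + qj) ^ 2 + pj * (pj + 2 * qj)) α := by
  have h1' : HasDerivAt (fun β : ℝ => (1 - β)) (-1) α := by
    simpa using (hasDerivAt_id α).const_sub 1
  have h2' : HasDerivAt (fun β : ℝ => β * pj * (pj + 2*qj)) (pj * (pj + 2*qj)) α := by
    simpa [mul_assoc] using (hasDerivAt_id α).mul_const (pj * (pj + 2*qj))
  refine ((h1'.mul_const ((pj + qj)^2)).add h2').congr_deriv ?_
  ring

private lemma aux_F (pj qj lamj α : ℝ) (hq : 0 < qj) (hp : 0 ≤ pj) (hα : α ∈ Set.Ioo (0:ℝ) 1) :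
    HasDerivAt (fun β => (pj + qj) ^ 2 * lamj ^ 2 * β
      / ((1 - β) * (pj + qj) ^ 2 + β * pj * (pj + 2 * qj)))
      ((pj + qj) ^ 4 * lamj ^ 2 / ((1 - α) * (pj + qj) ^ 2 + α * pj * (pj + 2 * qj)) ^ 2) α := by
  have hEpos := aux_Epos pj qj α hq hp hα
  have hnum : HasDerivAt (fun β : ℝ => (pj + qj) ^ 2 * lamj ^ 2 * β) ((pj + qj) ^ 2 * lamj ^ 2) α := by
    simpa using (hasDerivAt_id α).const_mul ((pj + qj) ^ 2 * lamj ^ 2)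
  have := hnum.div (aux_E' pj qj α) hEpos.ne'
  refine this.congr_deriv ?_
  field_simp
  ring

private lemma aux_G (pj qj α : ℝ) (hq : 0 < qj) (hp : 0 ≤ pj) (hα : α ∈ Set.Ioo (0:ℝ) 1) :
    HasDerivAt (fun β => (pj + qj) - qj * β - Real.sqrt (1 - β)
      * Real.sqrt ((1 - β) * (pj + qj) ^ 2 + β * pj * (pj + 2 * qj)))
      (-qj + Real.sqrt ((1 - α) * (pj + qj) ^ 2 + α * pj * (pj + 2 * qj)) / (2 * Real.sqrt (1 - α))
        + qj ^ 2 * Real.sqrt (1 - α)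
          / (2 * Real.sqrt ((1 - α) * (pj + qj) ^ 2 + α * pj * (pj + 2 * qj)))) α := by
  have hEpos := aux_Epos pj qj α hq hp hα
  have h1a : (0:ℝ) < 1 - α := by linarith [hα.2]
  have hs1 : HasDerivAt (fun β : ℝ => (1 - β)) (-1) α := by
    simpa using (hasDerivAt_id α).const_sub 1
  have hsqrt1 : HasDerivAt (fun β : ℝ => Real.sqrt (1 - β)) ((-1) / (2 * Real.sqrt (1 - α))) α :=
    hs1.sqrt h1a.ne'
  have hsqrtE := (aux_E' pj qj α).sqrt hEpos.ne'
  have hlin : HasDerivAt (fun β : ℝ => (pj + qj) - qj * β) (-qj) α := by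
    simpa using ((hasDerivAt_id α).const_mul qj).const_sub (pj + qj)
  have := hlin.sub (hsqrt1.mul hsqrtE)
  refine this.congr_deriv ?_
  have hs : Real.sqrt (1 - α) ≠ 0 := (Real.sqrt_pos.mpr h1a).ne'
  have he : Real.sqrt ((1 - α) * (pj + qj) ^ 2 + α * pj * (pj + 2 * qj)) ≠ 0 :=
    (Real.sqrt_pos.mpr hEpos).ne'
  set e := Real.sqrt ((1 - α) * (pj + qj) ^ 2 + α * pj * (pj + 2 * qj)) with hedef
  field_simp
  ring

set_option maxHeartbeats 1000000 in
/-- Remark 4.2: if all `pⱼ > 0`, then `(1−α)^{1/2}·Λ′(α) → ¼·Σⱼ √(pⱼ(pⱼ+2qⱼ))` as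
`α ↑ 1`; if instead some `j` has `pⱼ = 0` and `λ̄ⱼ ≠ 0`, then
`(1−α)²·Λ′(α) → ½·Σ_{j : pⱼ = 0} λ̄ⱼ²` as `α ↑ 1`. -/
theorem stmt_19 (n : ℕ) (hn : 1 ≤ n) (p q lam : Fin n → ℝ)
    (hq : ∀ j, 0 < q j) (hp : ∀ j, 0 ≤ p j)
    (rbar : ℝ) (hrbar : 0 ≤ rbar)
    (F G : Fin n → ℝ → ℝ) (Λ : ℝ → ℝ)
    (hF : ∀ j, ∀ α : ℝ, F j α
      = (p j + q j) ^ 2 * (lam j) ^ 2 * α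
          / ((1 - α) * (p j + q j) ^ 2 + α * p j * (p j + 2 * q j)))
    (hG : ∀ j, ∀ α : ℝ, G j α
      = (p j + q j) - q j * α
          - Real.sqrt (1 - α)
            * Real.sqrt ((1 - α) * (p j + q j) ^ 2 + α * p j * (p j + 2 * q j)))
    (hΛ : ∀ α : ℝ, Λ α = rbar * α + (1 / 2) * ∑ j, F j α + (1 / 2) * ∑ j, G j α) :
    ((∀ j, 0 < p j) →
      Filter.Tendsto (fun α : ℝ => Real.sqrt (1 - α) * deriv Λ α)
        (nhdsWithin 1 (Set.Ioo (0 : ℝ) 1))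
        (nhds ((1 / 4) * ∑ j, Real.sqrt (p j * (p j + 2 * q j))))) ∧
    ((∃ j, p j = 0 ∧ lam j ≠ 0) →
      Filter.Tendsto (fun α : ℝ => (1 - α) ^ 2 * deriv Λ α)
        (nhdsWithin 1 (Set.Ioo (0 : ℝ) 1))
        (nhds ((1 / 2) * ∑ j, if p j = 0 then (lam j) ^ 2 else 0))) := by
  have hΛfun : Λ = fun β => rbar * β
      + (1/2) * ∑ j, ((p j + q j) ^ 2 * (lam j) ^ 2 * β
          / ((1 - β) * (p j + q j) ^ 2 + β * p j * (p j + 2 * q j)))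
      + (1/2) * ∑ j, ((p j + q j) - q j * β - Real.sqrt (1 - β)
          * Real.sqrt ((1 - β) * (p j + q j) ^ 2 + β * p j * (p j + 2 * q j))) := by
    funext β
    rw [hΛ]
    simp only [hF, hG]
  have hderiv : ∀ α ∈ Set.Ioo (0:ℝ) 1, deriv Λ α =
      rbar + (1/2) * ∑ j, ((p j + q j) ^ 4 * (lam j) ^ 2
          / ((1 - α) * (p j + q j) ^ 2 + α * p j * (p j + 2 * q j)) ^ 2)
        + (1/2) * ∑ j, (-(q j)
          + Real.sqrt ((1 - α) * (p j + q j) ^ 2 + α * p j * (p j + 2 * q j))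
              / (2 * Real.sqrt (1 - α))
          + (q j) ^ 2 * Real.sqrt (1 - α)
              / (2 * Real.sqrt ((1 - α) * (p j + q j) ^ 2 + α * p j * (p j + 2 * q j)))) := by
    intro α hα
    have H : HasDerivAt Λ (rbar * 1
        + (1/2) * ∑ j, ((p j + q j) ^ 4 * (lam j) ^ 2
            / ((1 - α) * (p j + q j) ^ 2 + α * p j * (p j + 2 * q j)) ^ 2)
        + (1/2) * ∑ j, (-(q j)
          + Real.sqrt ((1 - α) * (p j + q j) ^ 2 + α * p j * (p j + 2 * q j))
              / (2 * Real.sqrt (1 - α))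
          + (q j) ^ 2 * Real.sqrt (1 - α)
              / (2 * Real.sqrt ((1 - α) * (p j + q j) ^ 2 + α * p j * (p j + 2 * q j))))) α := by
      rw [hΛfun]
      exact (((hasDerivAt_id α).const_mul rbar).add
          (HasDerivAt.const_mul (1/2)
            (HasDerivAt.fun_sum fun j _ => aux_F (p j) (q j) (lam j) α (hq j) (hp j) hα))).add
        (HasDerivAt.const_mul (1/2)
          (HasDerivAt.fun_sum fun j _ => aux_G (p j) (q j) α (hq j) (hp j) hα))
    rw [H.deriv]
    ring
  have factor : ∀ (c : ℝ) (X : Fin n → ℝ),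
      c * ((1/2 : ℝ) * ∑ j, X j) = (1/2) * ∑ j, c * X j := by
    intro c X
    rw [mul_left_comm, Finset.mul_sum]
  constructor
  · -- Part 1 : all p j > 0
    intro hppos
    set L1 : ℝ → ℝ := fun α => Real.sqrt (1-α) * rbar
      + (1/2) * ∑ j, Real.sqrt (1-α) * ((p j + q j)^4*(lam j)^2
            / ((1-α)*(p j+q j)^2 + α*p j*(p j+2*q j))^2)
      + (1/2) * ∑ j, (-(q j) * Real.sqrt (1-α)
          + Real.sqrt ((1-α)*(p j+q j)^2 + α*p j*(p j+2*q j)) / 2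
          + (q j)^2 * (1-α) / (2 * Real.sqrt ((1-α)*(p j+q j)^2 + α*p j*(p j+2*q j))))
      with hL1
    have key : ∀ α ∈ Set.Ioo (0:ℝ) 1, Real.sqrt (1-α) * deriv Λ α = L1 α := by
      intro α hα
      have h1a : (0:ℝ) < 1 - α := by linarith [hα.2]
      have hs2 : Real.sqrt (1-α) * Real.sqrt (1-α) = 1-α := Real.mul_self_sqrt h1a.le
      simp only [hL1]
      rw [hderiv α hα, mul_add, mul_add, factor, factor]
      congr 1
      refine congrArg (HMul.hMul (1/2 : ℝ)) (Finset.sum_congr rfl fun j _ => ?_)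
      have hE := aux_Epos (p j) (q j) α (hq j) (hp j) hα
      set s := Real.sqrt (1-α) with hsdef
      set e := Real.sqrt ((1-α)*(p j+q j)^2 + α*p j*(p j+2*q j)) with hedef
      have hs : s ≠ 0 := by rw [hsdef]; exact (Real.sqrt_pos.mpr h1a).ne'
      have he : e ≠ 0 := by rw [hedef]; exact (Real.sqrt_pos.mpr hE).ne'
      rw [← hs2]
      field_simp
    have hE1pos : ∀ j, 0 < (1-(1:ℝ))*(p j+q j)^2 + 1*p j*(p j+2*q j) := fun j => by
      have := hq j; have := hppos j; nlinarith
    have hcA : ContinuousAt L1 1 := by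
      rw [hL1]
      apply ContinuousAt.add
      apply ContinuousAt.add
      · fun_prop
      · apply ContinuousAt.mul continuousAt_const
        exact tendsto_finset_sum _ fun j _ =>
          (ContinuousAt.sqrt (by fun_prop)).mul
            (ContinuousAt.div (by fun_prop) (by fun_prop) (pow_ne_zero 2 (hE1pos j).ne'))
      · apply ContinuousAt.mul continuousAt_const
        refine tendsto_finset_sum _ fun j _ => ?_
        have hne : Real.sqrt ((1-(1:ℝ))*(p j+q j)^2 + 1*p j*(p j+2*q j)) ≠ 0 :=
          (Real.sqrt_pos.mpr (hE1pos j)).ne'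
        apply ContinuousAt.add
        apply ContinuousAt.add
        · fun_prop
        · exact (ContinuousAt.sqrt (by fun_prop)).div_const 2
        · exact ContinuousAt.div (by fun_prop)
            (continuousAt_const.mul (ContinuousAt.sqrt (by fun_prop)))
            (mul_ne_zero two_ne_zero hne)
    have hval : L1 1 = (1/4) * ∑ j, Real.sqrt (p j * (p j + 2 * q j)) := by
      rw [hL1]
      simp only [sub_self, Real.sqrt_zero, mul_zero, zero_mul, zero_add, add_zero, one_mul,
        zero_div, Finset.sum_const_zero, neg_zero]
      rw [← Finset.sum_div]
      ring
    refine Filter.Tendsto.congr'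
      (Filter.eventuallyEq_of_mem self_mem_nhdsWithin fun α hα => (key α hα).symm) ?_
    have h2 := hcA.tendsto.mono_left
      (nhdsWithin_le_nhds : nhdsWithin (1:ℝ) (Set.Ioo 0 1) ≤ nhds 1)
    rwa [hval] at h2
  · -- Part 2 : some p j = 0
    intro _
    set L2 : ℝ → ℝ := fun α => (1-α)^2 * rbar
      + (1/2) * ∑ j, (if p j = 0 then (lam j)^2 else
          (1-α)^2 * ((p j + q j)^4*(lam j)^2
            / ((1-α)*(p j+q j)^2 + α*p j*(p j+2*q j))^2))
      + (1/2) * ∑ j, (if p j = 0 then 0 else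
          -(q j) * (1-α)^2
          + (1-α) * Real.sqrt (1-α) * Real.sqrt ((1-α)*(p j+q j)^2 + α*p j*(p j+2*q j)) / 2
          + (q j)^2 * (1-α)^2 * Real.sqrt (1-α)
              / (2 * Real.sqrt ((1-α)*(p j+q j)^2 + α*p j*(p j+2*q j))))
      with hL2
    have key : ∀ α ∈ Set.Ioo (0:ℝ) 1, (1-α)^2 * deriv Λ α = L2 α := by
      intro α hα
      have h1a : (0:ℝ) < 1 - α := by linarith [hα.2]
      have hs2 : Real.sqrt (1-α) * Real.sqrt (1-α) = 1-α := Real.mul_self_sqrt h1a.le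
      simp only [hL2]
      rw [hderiv α hα, mul_add, mul_add, factor, factor]
      congr 1
      · congr 1
        refine congrArg (HMul.hMul (1/2 : ℝ)) (Finset.sum_congr rfl fun j _ => ?_)
        by_cases hpj : p j = 0
        · rw [if_pos hpj, hpj]
          rw [show (1-α)*((0:ℝ)+q j)^2 + α*0*(0+2*q j) = (1-α)*(q j)^2 from by ring]
          have h1 : (1-α) ≠ 0 := h1a.ne'
          have h2 : q j ≠ 0 := (hq j).ne'
          field_simp
          ring
        · rw [if_neg hpj]
      · refine congrArg (HMul.hMul (1/2 : ℝ)) (Finset.sum_congr rfl fun j _ => ?_)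
        by_cases hpj : p j = 0
        · rw [if_pos hpj, hpj]
          rw [show (1-α)*((0:ℝ)+q j)^2 + α*0*(0+2*q j) = (1-α)*(q j)^2 from by ring,
            Real.sqrt_mul h1a.le, Real.sqrt_sq (hq j).le]
          have hs : Real.sqrt (1-α) ≠ 0 := (Real.sqrt_pos.mpr h1a).ne'
          have h2 : q j ≠ 0 := (hq j).ne'
          field_simp
          ring
        · rw [if_neg hpj]
          have hE := aux_Epos (p j) (q j) α (hq j) (hp j) hα
          set s := Real.sqrt (1-α) with hsdef
          set e := Real.sqrt ((1-α)*(p j+q j)^2 + α*p j*(p j+2*q j)) with hedef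
          have hs : s ≠ 0 := by rw [hsdef]; exact (Real.sqrt_pos.mpr h1a).ne'
          have he : e ≠ 0 := by rw [hedef]; exact (Real.sqrt_pos.mpr hE).ne'
          rw [← hs2]
          field_simp
    have hcA : ContinuousAt L2 1 := by
      rw [hL2]
      apply ContinuousAt.add
      apply ContinuousAt.add
      · fun_prop
      · apply ContinuousAt.mul continuousAt_const
        refine tendsto_finset_sum _ fun j _ => ?_
        by_cases hpj : p j = 0
        · simp only [if_pos hpj]
          exact continuousAt_const
        · simp only [if_neg hpj]
          have hpj' : 0 < p j := lt_of_le_of_ne (hp j) (Ne.symm hpj)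
          have hE1pos : 0 < (1-(1:ℝ))*(p j+q j)^2 + 1*p j*(p j+2*q j) := by
            have := hq j; nlinarith
          exact (by fun_prop : ContinuousAt (fun α : ℝ => (1-α)^2) 1).mul
            (ContinuousAt.div (by fun_prop) (by fun_prop) (pow_ne_zero 2 hE1pos.ne'))
      · apply ContinuousAt.mul continuousAt_const
        refine tendsto_finset_sum _ fun j _ => ?_
        by_cases hpj : p j = 0
        · simp only [if_pos hpj]
          exact continuousAt_const
        · simp only [if_neg hpj]
          have hpj' : 0 < p j := lt_of_le_of_ne (hp j) (Ne.symm hpj)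
          have hE1pos : 0 < (1-(1:ℝ))*(p j+q j)^2 + 1*p j*(p j+2*q j) := by
            have := hq j; nlinarith
          have hne : Real.sqrt ((1-(1:ℝ))*(p j+q j)^2 + 1*p j*(p j+2*q j)) ≠ 0 :=
            (Real.sqrt_pos.mpr hE1pos).ne'
          apply ContinuousAt.add
          apply ContinuousAt.add
          · fun_prop
          · exact (((by fun_prop : ContinuousAt (fun α : ℝ => (1-α) * Real.sqrt (1-α)) 1)).mul
              (ContinuousAt.sqrt (by fun_prop))).div_const 2
          · exact ContinuousAt.div (by fun_prop)
              (continuousAt_const.mul (ContinuousAt.sqrt (by fun_prop)))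
              (mul_ne_zero two_ne_zero hne)
    have hval : L2 1 = (1/2) * ∑ j, (if p j = 0 then (lam j)^2 else 0) := by
      rw [hL2]
      simp only [sub_self, Real.sqrt_zero, mul_zero, zero_mul, zero_add, add_zero, one_mul,
        zero_div, ne_eq, OfNat.ofNat_ne_zero, not_false_eq_true, zero_pow, neg_zero,
        Finset.sum_const_zero, ite_self]
    refine Filter.Tendsto.congr'
      (Filter.eventuallyEq_of_mem self_mem_nhdsWithin fun α hα => (key α hα).symm) ?_
    have h2 := hcA.tendsto.mono_left
      (nhdsWithin_le_nhds : nhdsWithin (1:ℝ) (Set.Ioo 0 1) ≤ nhds 1)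
    rwa [hval] at h2
end
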